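/- arXiv:2204.02516 — 4 statements merged into one kernel-verified Lean document; each statement's English description precedes it below -/
import Mathlib

section
/- For linear maps φ : M_a → M_b and ψ : M_b → M_a, the identity C_{ψ ∘ φ*} = (φ ⊗ ψ)(C_{id_a}) holds, where C_{id_a} = Σ_{i,j} E_{ij} ⊗ E_{ij} is the Choi matrix of the identity map. -/
open Matrix Kronecker BigOperators

noncomputable def choi {a b : ℕ}
    (φ : Matrix (Fin a) (Fin a) ℂ →ₗ[ℂ] Matrix (Fin b) (Fin b) ℂ) :
    Matrix (Fin a × Fin b) (Fin a × Fin b) ℂ :=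
  ∑ i : Fin a, ∑ j : Fin a,
    (Matrix.single i j (1 : ℂ)) ⊗ₖ φ (Matrix.single i j (1 : ℂ))

noncomputable def tensorMap {a₁ b₁ a₂ b₂ : ℕ}
    (φ₁ : Matrix (Fin a₁) (Fin a₁) ℂ →ₗ[ℂ] Matrix (Fin b₁) (Fin b₁) ℂ)
    (φ₂ : Matrix (Fin a₂) (Fin a₂) ℂ →ₗ[ℂ] Matrix (Fin b₂) (Fin b₂) ℂ)
    (M : Matrix (Fin a₁ × Fin a₂) (Fin a₁ × Fin a₂) ℂ) :
    Matrix (Fin b₁ × Fin b₂) (Fin b₁ × Fin b₂) ℂ :=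
  ∑ i : Fin a₁, ∑ j : Fin a₁,
    (φ₁ (Matrix.single i j (1 : ℂ))) ⊗ₖ
      (φ₂ (Matrix.of fun k l => M (i, k) (j, l)))

noncomputable def adS {a b : ℕ} (s : Matrix (Fin a) (Fin b) ℂ) :
    Matrix (Fin a) (Fin a) ℂ →ₗ[ℂ] Matrix (Fin b) (Fin b) ℂ where
  toFun x := sᴴ * x * s
  map_add' x y := by simp [Matrix.mul_add, Matrix.add_mul]
  map_smul' c x := by simp [Matrix.mul_smul, Matrix.smul_mul]

noncomputable def pairM {n : Type*} [Fintype n] (x y : Matrix n n ℂ) : ℂ := (x * yᵀ).trace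

/- The pairing identity determines the dual on matrix units, `φ*(E_mn) = ∑ φ(E_ij)_mn • E_ij`,
so the `((m, k), (n, l))` entry of both sides is `∑ φ(E_ij)_mn * ψ(E_ij)_kl`. -/

theorem pairM_single_right {n : Type*} [Fintype n] [DecidableEq n] (x : Matrix n n ℂ) (i j : n) :
    pairM x (single i j 1) = x i j := by
  simp [pairM, transpose_single, trace_mul_single]

theorem pairM_single_left {n : Type*} [Fintype n] [DecidableEq n] (y : Matrix n n ℂ) (i j : n) :
    pairM (single i j 1) y = y i j := by
  simp [pairM, trace_single_mul]

section Dual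

variable {ι κ : Type*} [Fintype ι] [DecidableEq ι] [Fintype κ] [DecidableEq κ]
  {φ : Matrix ι ι ℂ →ₗ[ℂ] Matrix κ κ ℂ}
  {φd : Matrix κ κ ℂ →ₗ[ℂ] Matrix ι ι ℂ}

theorem dual_single_apply (hdual : ∀ y x, pairM (φd y) x = pairM y (φ x))
    (m n : κ) (i j : ι) :
    φd (single m n 1) i j = φ (single i j 1) m n := by
  rw [← pairM_single_right (φd _) i j, hdual, pairM_single_left]

theorem dual_single_eq_sum (hdual : ∀ y x, pairM (φd y) x = pairM y (φ x)) (m n : κ) :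
    φd (single m n 1) = ∑ i : ι, ∑ j : ι, φ (single i j 1) m n • single i j 1 := by
  conv_lhs => rw [matrix_eq_sum_single (φd (single m n 1))]
  simp [dual_single_apply hdual]

end Dual

theorem choi_apply {a b : ℕ}
    (φ : Matrix (Fin a) (Fin a) ℂ →ₗ[ℂ] Matrix (Fin b) (Fin b) ℂ)
    (i j : Fin a) (k l : Fin b) :
    choi φ (i, k) (j, l) = φ (single i j 1) k l := by
  simp [choi, Matrix.sum_apply, kroneckerMap_apply, single, ite_and]

theorem tensorMap_choi {a b₁ b₂ c : ℕ}
    (φ : Matrix (Fin a) (Fin a) ℂ →ₗ[ℂ] Matrix (Fin b₁) (Fin b₁) ℂ)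
    (ψ : Matrix (Fin c) (Fin c) ℂ →ₗ[ℂ] Matrix (Fin b₂) (Fin b₂) ℂ)
    (χ : Matrix (Fin a) (Fin a) ℂ →ₗ[ℂ] Matrix (Fin c) (Fin c) ℂ) :
    tensorMap φ ψ (choi χ) =
      ∑ i : Fin a, ∑ j : Fin a, φ (single i j 1) ⊗ₖ ψ (χ (single i j 1)) := by
  unfold tensorMap
  congr! with i _ j _
  ext k l
  exact choi_apply χ i j k l

/-- `C_{ψ ∘ φ*} = (φ ⊗ ψ)(C_{id_a})`. -/
theorem stmt_2 {a b : ℕ}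
    (φ ψ : Matrix (Fin a) (Fin a) ℂ →ₗ[ℂ] Matrix (Fin b) (Fin b) ℂ)
    (φd : Matrix (Fin b) (Fin b) ℂ →ₗ[ℂ] Matrix (Fin a) (Fin a) ℂ)
    (hdual : ∀ (y : Matrix (Fin b) (Fin b) ℂ) (x : Matrix (Fin a) (Fin a) ℂ),
      pairM (φd y) x = pairM y (φ x)) :
    choi (ψ ∘ₗ φd) = tensorMap φ ψ (choi (LinearMap.id)) := by
  ext ⟨m, k⟩ ⟨n, l⟩
  rw [choi_apply, tensorMap_choi, LinearMap.comp_apply, dual_single_eq_sum hdual]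
  simp only [LinearMap.id_apply, map_sum, map_smul, Matrix.sum_apply, Matrix.smul_apply,
    kroneckerMap_apply, smul_eq_mul]
end

section
/- If s = |ξ⟩⟨η| ∈ M_{a,b} is a rank-one matrix, then Ad_s(x) = ⟨ξ| x |ξ⟩ · |η⟩⟨η| for all x ∈ M_a; consequently every 1-superpositive map φ (a nonnegative sum of Ad_{s_i} with rank s_i ≤ 1) has a Holevo form φ(x) = Σ_k Tr(x v_kᵗ) u_k with u_k, v_k positive semidefinite. -/
open Matrix Kronecker BigOperators
open scoped ComplexOrder

/-! Writing a rank-one `s` as `|ξ⟩⟨η|`, the map `Ad_s` is `x ↦ ⟨ξ|x|ξ⟩ |η⟩⟨η|`. The scalar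
`⟨ξ|x|ξ⟩` equals `Tr(x vᵀ)` for the positive semidefinite `v = |ξ̄⟩⟨ξ̄|`, so each `Ad_{s_i}` is a
single Holevo term, and a nonnegative combination of them is a Holevo form with `u_i = c_i |η_i⟩⟨η_i|`. -/

namespace Matrix

theorem exists_eq_vecMulVec_of_rank_le_one {K m n : Type*} [Field K] [Fintype m] [Fintype n]
    {s : Matrix m n K} (hs : s.rank ≤ 1) : ∃ (u : m → K) (v : n → K), s = vecMulVec u v := by
  classical
  obtain ⟨u, hu⟩ := finrank_le_one_iff.mp hs
  have hcol : ∀ j, ∃ r : K, r • u.1 = s.col j := fun j => by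
    obtain ⟨r, hr⟩ := hu ⟨s *ᵥ Pi.single j 1, LinearMap.mem_range_self s.mulVecLin _⟩
    exact ⟨r, by simpa using congrArg Subtype.val hr⟩
  choose r hr using hcol
  refine ⟨u.1, r, ext fun i j => ?_⟩
  rw [vecMulVec_apply, mul_comm, ← col_apply s j i, ← hr j, Pi.smul_apply, smul_eq_mul]

theorem trace_mul_transpose_vecMulVec {R n : Type*} [CommSemiring R] [Fintype n]
    (x : Matrix n n R) (w v : n → R) : (x * (vecMulVec w v)ᵀ).trace = w ⬝ᵥ x *ᵥ v := by
  rw [transpose_vecMulVec, mul_vecMulVec, trace_vecMulVec, dotProduct_comm]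

theorem star_dotProduct_mulVec_eq_sum {R n : Type*} [CommSemiring R] [StarRing R] [Fintype n]
    (x : Matrix n n R) (ξ : n → R) : star ξ ⬝ᵥ x *ᵥ ξ = ∑ i, ∑ j, star (ξ i) * x i j * ξ j := by
  simp only [dotProduct, mulVec, Finset.mul_sum, Pi.star_apply, mul_assoc]

end Matrix

theorem adS_vecMulVec {a b : ℕ} (ξ : Fin a → ℂ) (η : Fin b → ℂ) (x : Matrix (Fin a) (Fin a) ℂ) :
    adS (vecMulVec ξ (star η)) x = (star ξ ⬝ᵥ x *ᵥ ξ) • vecMulVec η (star η) := by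
  change (vecMulVec ξ (star η))ᴴ * x * vecMulVec ξ (star η) = _
  rw [conjTranspose_vecMulVec, star_star, vecMulVec_mul, vecMulVec_mul_vecMulVec, vecMulVec_smul,
    ← dotProduct_mulVec]

theorem exists_adS_eq_trace_smul_of_rank_le_one {a b : ℕ} {s : Matrix (Fin a) (Fin b) ℂ}
    (hs : s.rank ≤ 1) :
    ∃ (u : Matrix (Fin b) (Fin b) ℂ) (v : Matrix (Fin a) (Fin a) ℂ),
      u.PosSemidef ∧ v.PosSemidef ∧ ∀ x, adS s x = (x * vᵀ).trace • u := by
  obtain ⟨ξ, η, rfl⟩ := exists_eq_vecMulVec_of_rank_le_one hs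
  refine ⟨vecMulVec (star η) η, vecMulVec (star ξ) ξ, posSemidef_vecMulVec_star_self η,
    posSemidef_vecMulVec_star_self ξ, fun x => ?_⟩
  rw [trace_mul_transpose_vecMulVec]
  simpa only [star_star] using adS_vecMulVec ξ (star η) x

/-- For a rank-one matrix `s = |ξ⟩⟨η|` one has `Ad_s(x) = ⟨ξ|x|ξ⟩ |η⟩⟨η|`;
consequently every 1-superpositive map has a Holevo form
`φ(x) = ∑ₖ Tr(x vₖᵗ) uₖ` with `uₖ, vₖ` positive semidefinite. -/
theorem stmt_16 {a b : ℕ} :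
    (∀ (ξ : Fin a → ℂ) (η : Fin b → ℂ) (x : Matrix (Fin a) (Fin a) ℂ),
      adS (Matrix.of fun i j => ξ i * (starRingEnd ℂ) (η j)) x =
        (∑ i : Fin a, ∑ j : Fin a, (starRingEnd ℂ) (ξ i) * x i j * ξ j) •
          Matrix.of fun p q : Fin b => η p * (starRingEnd ℂ) (η q)) ∧
    (∀ (φ : Matrix (Fin a) (Fin a) ℂ →ₗ[ℂ] Matrix (Fin b) (Fin b) ℂ),
      (∃ (n : ℕ) (c : Fin n → ℝ) (s : Fin n → Matrix (Fin a) (Fin b) ℂ),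
        (∀ i, 0 ≤ c i) ∧ (∀ i, (s i).rank ≤ 1) ∧
        ∀ x, φ x = ∑ i : Fin n, (c i : ℂ) • adS (s i) x) →
      ∃ (m : ℕ) (u : Fin m → Matrix (Fin b) (Fin b) ℂ)
        (v : Fin m → Matrix (Fin a) (Fin a) ℂ),
        (∀ k, (u k).PosSemidef) ∧ (∀ k, (v k).PosSemidef) ∧
        ∀ x, φ x = ∑ k : Fin m, (x * (v k)ᵀ).trace • u k) := by
  refine ⟨fun ξ η x => (adS_vecMulVec ξ η x).trans ?_, ?_⟩
  · rw [star_dotProduct_mulVec_eq_sum]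
    rfl
  · rintro φ ⟨n, c, s, hc, hs, hφ⟩
    choose u v hu hv hadS using fun i => exists_adS_eq_trace_smul_of_rank_le_one (hs i)
    refine ⟨n, fun i => (c i : ℂ) • u i, v, fun i => (hu i).smul ?_, hv, fun x => ?_⟩
    · exact_mod_cast hc i
    · simp only [hφ x, hadS, smul_comm (c _ : ℂ)]
end

section
/- The Tomiyama–Choi map φ_λ : M_n → M_n defined by φ_λ(x) = λ·Tr(x)·I_n − x is positive (sends positive semidefinite matrices to positive semidefinite matrices) if and only if λ ≥ 1. -/
/-!
Every eigenvalue of a positive semidefinite `x` is at most the sum of all of them, so `x ≤ Tr(x) I`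
in the Loewner order. Hence for `λ ≥ 1`, `λ Tr(x) I - x = (λ - 1) Tr(x) I + (Tr(x) I - x) ≥ 0`.
Conversely, on the rank-one projection `E_ii` the `(i, i)` entry of `λ Tr(E_ii) I - E_ii` is `λ - 1`.
-/

open Matrix Kronecker BigOperators
open scoped ComplexOrder

open scoped MatrixOrder

namespace Matrix

variable {𝕜 n : Type*} [RCLike 𝕜] [Fintype n] [DecidableEq n]

lemma PosSemidef.le_trace_smul_one {x : Matrix n n 𝕜} (hx : x.PosSemidef) :
    x ≤ x.trace • (1 : Matrix n n 𝕜) := by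
  have hspec : ∀ t ∈ spectrum ℝ x, t ≤ ∑ i, hx.isHermitian.eigenvalues i := by
    intro t ht
    obtain ⟨i, rfl⟩ := hx.isHermitian.spectrum_real_eq_range_eigenvalues ▸ ht
    exact Finset.single_le_sum (fun j _ => hx.eigenvalues_nonneg j) (Finset.mem_univ i)
  rw [hx.isHermitian.trace_eq_sum_eigenvalues, ← RCLike.ofReal_sum,
    ← RCLike.real_smul_eq_coe_smul, ← Algebra.algebraMap_eq_smul_one]
  exact le_algebraMap_of_spectrum_le hspec hx.isHermitian.isSelfAdjoint

lemma PosSemidef.smul_trace_smul_one_sub {x : Matrix n n 𝕜} (hx : x.PosSemidef) {lam : ℝ}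
    (hlam : 1 ≤ lam) : ((lam : 𝕜) • x.trace • (1 : Matrix n n 𝕜) - x).PosSemidef := by
  have hsplit : (lam : 𝕜) • x.trace • (1 : Matrix n n 𝕜) - x
      = (((lam - 1 : ℝ) : 𝕜) * x.trace) • 1 + (x.trace • 1 - x) := by
    push_cast; rw [sub_mul, one_mul, sub_smul, smul_smul]; abel
  rw [hsplit]
  refine .add (PosSemidef.one.smul ?_) hx.le_trace_smul_one
  exact mul_nonneg (RCLike.ofReal_nonneg.2 (sub_nonneg.2 hlam)) hx.trace_nonneg

lemma one_le_of_posSemidef_smul_trace_smul_one_sub_single {lam : ℝ} (i : n)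
    (h : ((lam : 𝕜) • (single i i (1 : 𝕜)).trace • (1 : Matrix n n 𝕜) -
      single i i 1).PosSemidef) :
    1 ≤ lam := by
  have := h.diag_nonneg (i := i)
  simp only [trace_single_eq_same, one_smul, sub_apply, smul_apply, one_apply_eq,
    single_apply_same, smul_eq_mul, mul_one] at this
  exact_mod_cast sub_nonneg.1 this

end Matrix

/-- The Tomiyama–Choi map `φ_λ(x) = λ Tr(x) I − x` is positive iff `λ ≥ 1`. -/
theorem stmt_17 {n : ℕ} (hn : 0 < n) (lam : ℝ) :
    (∀ x : Matrix (Fin n) (Fin n) ℂ, x.PosSemidef →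
      ((lam : ℂ) • x.trace • (1 : Matrix (Fin n) (Fin n) ℂ) - x).PosSemidef) ↔
    1 ≤ lam := by
  refine ⟨fun h => ?_, fun hlam x hx => hx.smul_trace_smul_one_sub hlam⟩
  let i : Fin n := ⟨0, hn⟩
  refine one_le_of_posSemidef_smul_trace_smul_one_sub_single i (h _ ?_)
  rw [← diagonal_single]
  exact posSemidef_diagonal_iff.2 (Pi.single_nonneg.2 zero_le_one)
end

section
/- The Tomiyama–Choi map φ_λ : M_n → M_n, φ_λ(x) = λ·Tr(x)·I_n − x, is completely positive if and only if λ ≥ n. -/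
/-!
Write `T = Tr₂ ρ ⊗ I`, so that `(id ⊗ φ_λ)(ρ) = λ T - ρ`. For `ρ ≥ 0` one has `ρ ≤ n T`:
split a vector `x = ∑ₘ yₘ` into its `n` blocks along the second factor. Positivity of
`∑_{i,j} ⟨yᵢ - yⱼ, ρ (yᵢ - yⱼ)⟩` gives the pinching inequality
`⟨x, ρ x⟩ ≤ n ∑ₘ ⟨yₘ, ρ yₘ⟩`, and `⟨yₘ, ρ yₘ⟩` is one of the nonnegative terms of `⟨x, T x⟩`.
Hence `λ T - ρ = (λ - n) T + (n T - ρ) ≥ 0` when `λ ≥ n`. Conversely, for the unnormalised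
maximally entangled vector `Ω = vec I = ∑ᵢ eᵢ ⊗ eᵢ` one has `Tr₂ (Ω Ω*) = I`, and
`⟨Ω, (λ I - Ω Ω*) Ω⟩ = λ n - n²`, which forces `λ ≥ n`.
-/

open Matrix Kronecker BigOperators
open scoped ComplexOrder

/-- The Tomiyama–Choi map `φ_λ(x) = λ Tr(x) I − x` as a linear map. -/
noncomputable def tomiyamaChoi (n : ℕ) (lam : ℝ) :
    Matrix (Fin n) (Fin n) ℂ →ₗ[ℂ] Matrix (Fin n) (Fin n) ℂ where
  toFun x := (lam : ℂ) • x.trace • (1 : Matrix (Fin n) (Fin n) ℂ) - x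
  map_add' x y := by
    simp [Matrix.trace_add, add_smul, smul_add]
    abel
  map_smul' c x := by
    simp only [Matrix.trace_smul, smul_smul, smul_sub, RingHom.id_apply,
      smul_eq_mul]
    ring_nf


namespace Matrix

variable {𝕜 κ ν ι : Type*} [RCLike 𝕜] [Fintype ν]

def partialTraceRight (ρ : Matrix (κ × ν) (κ × ν) 𝕜) : Matrix κ κ 𝕜 :=
  ∑ m, ρ.submatrix (·, m) (·, m)

lemma partialTraceRight_apply (ρ : Matrix (κ × ν) (κ × ν) 𝕜) (a c : κ) :
    partialTraceRight ρ a c = ∑ m, ρ (a, m) (c, m) := by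
  simp [partialTraceRight, sum_apply]

lemma PosSemidef.partialTraceRight {ρ : Matrix (κ × ν) (κ × ν) 𝕜} (hρ : ρ.PosSemidef) :
    ρ.partialTraceRight.PosSemidef :=
  posSemidef_sum _ fun _ _ => hρ.submatrix _

lemma partialTraceRight_vecMulVec_vec_one [DecidableEq ν] :
    partialTraceRight (vecMulVec (vec (1 : Matrix ν ν 𝕜)) (star (vec 1))) = 1 := by
  ext a c
  simp [partialTraceRight_apply, vecMulVec_apply, vec, one_apply, eq_comm]

lemma star_vec_one_dotProduct_vec_one [DecidableEq ν] :
    star (vec (1 : Matrix ν ν 𝕜)) ⬝ᵥ vec 1 = Fintype.card ν := by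
  simp [star_vec_dotProduct_vec]

lemma dotProduct_kronecker_one_mulVec [Fintype κ] [DecidableEq ν] (A : Matrix κ κ 𝕜)
    (x : κ × ν → 𝕜) :
    star x ⬝ᵥ ((A ⊗ₖ (1 : Matrix ν ν 𝕜)) *ᵥ x) =
      ∑ b, star (fun a => x (a, b)) ⬝ᵥ (A *ᵥ fun a => x (a, b)) := by
  simp only [dotProduct, mulVec, Fintype.sum_prod_type, kroneckerMap_apply, one_apply,
    Pi.star_apply, mul_ite, mul_one, mul_zero, ite_mul, zero_mul, Finset.sum_ite_eq,
    Finset.mem_univ, if_true, Finset.mul_sum]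
  exact Finset.sum_comm

lemma PosSemidef.dotProduct_mulVec_sum_le {m : Type*} [Fintype m] {A : Matrix m m 𝕜}
    (hA : A.PosSemidef) (s : Finset ι) (y : ι → m → 𝕜) :
    star (∑ i ∈ s, y i) ⬝ᵥ (A *ᵥ ∑ i ∈ s, y i) ≤
      s.card * ∑ i ∈ s, star (y i) ⬝ᵥ (A *ᵥ y i) := by
  set B : (m → 𝕜) → (m → 𝕜) → 𝕜 := fun u v => star u ⬝ᵥ (A *ᵥ v) with hB
  have hexpand : ∀ u v, B (u - v) (u - v) = B u u - B u v - B v u + B v v := by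
    intro u v
    simp only [hB, star_sub, mulVec_sub, sub_dotProduct, dotProduct_sub]
    ring
  have hsum : B (∑ i ∈ s, y i) (∑ i ∈ s, y i) = ∑ i ∈ s, ∑ j ∈ s, B (y i) (y j) := by
    simp only [hB, star_sum, mulVec_sum, sum_dotProduct, dotProduct_sum]
    exact Finset.sum_comm
  have hid : ∑ i ∈ s, ∑ j ∈ s, B (y i - y j) (y i - y j) =
      2 * (s.card * ∑ i ∈ s, B (y i) (y i) - B (∑ i ∈ s, y i) (∑ i ∈ s, y i)) := by
    simp only [hexpand, hsum, Finset.sum_add_distrib, Finset.sum_sub_distrib, Finset.sum_const,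
      nsmul_eq_mul, Finset.mul_sum]
    rw [Finset.sum_comm (f := fun i j => B (y j) (y i))]
    ring
  have hnonneg : 0 ≤ ∑ i ∈ s, ∑ j ∈ s, B (y i - y j) (y i - y j) :=
    Finset.sum_nonneg fun i _ => Finset.sum_nonneg fun j _ => hA.dotProduct_mulVec_nonneg _
  have hhalf : s.card * ∑ i ∈ s, B (y i) (y i) - B (∑ i ∈ s, y i) (∑ i ∈ s, y i) =
      ((2⁻¹ : ℝ) : 𝕜) * ∑ i ∈ s, ∑ j ∈ s, B (y i - y j) (y i - y j) := by
    rw [hid]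
    push_cast
    ring
  exact sub_nonneg.mp (hhalf ▸ mul_nonneg (RCLike.ofReal_nonneg.mpr (by norm_num)) hnonneg)

lemma dotProduct_partialTraceRight_mulVec [Fintype κ] (ρ : Matrix (κ × ν) (κ × ν) 𝕜)
    (v : κ → 𝕜) :
    star v ⬝ᵥ (ρ.partialTraceRight *ᵥ v) = ∑ m, star v ⬝ᵥ (ρ.submatrix (·, m) (·, m) *ᵥ v) := by
  simp only [partialTraceRight, sum_mulVec, dotProduct_sum]

lemma dotProduct_submatrix_mulVec_slice [Fintype κ] [DecidableEq ν]
    (ρ : Matrix (κ × ν) (κ × ν) 𝕜) (x : κ × ν → 𝕜) (m : ν) :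
    star (fun a => x (a, m)) ⬝ᵥ (ρ.submatrix (·, m) (·, m) *ᵥ fun a => x (a, m)) =
      star (fun p => if p.2 = m then x p else 0) ⬝ᵥ
        (ρ *ᵥ fun p => if p.2 = m then x p else 0) := by
  simp [dotProduct, mulVec, Fintype.sum_prod_type, apply_ite star, ite_mul, mul_ite]

lemma PosSemidef.card_smul_partialTraceRight_kronecker_one_sub [Fintype κ] [DecidableEq ν]
    {ρ : Matrix (κ × ν) (κ × ν) 𝕜} (hρ : ρ.PosSemidef) :
    ((Fintype.card ν : 𝕜) • (ρ.partialTraceRight ⊗ₖ (1 : Matrix ν ν 𝕜)) - ρ).PosSemidef := by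
  have hT := hρ.partialTraceRight.kronecker (PosSemidef.one (n := ν) (R := 𝕜))
  refine .of_dotProduct_mulVec_nonneg ((hT.smul (Nat.cast_nonneg' _)).isHermitian.sub
    hρ.isHermitian) fun x => ?_
  set y : ν → κ × ν → 𝕜 := fun m p => if p.2 = m then x p else 0
  have hx : ∑ m, y m = x := by
    ext p
    simp [y, Finset.sum_apply]
  rw [sub_mulVec, dotProduct_sub, smul_mulVec, dotProduct_smul, sub_nonneg, smul_eq_mul]
  calc star x ⬝ᵥ (ρ *ᵥ x) = star (∑ m, y m) ⬝ᵥ (ρ *ᵥ ∑ m, y m) := by rw [hx]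
    _ ≤ Fintype.card ν * ∑ m, star (y m) ⬝ᵥ (ρ *ᵥ y m) := hρ.dotProduct_mulVec_sum_le _ y
    _ = Fintype.card ν * ∑ m, star (fun a => x (a, m)) ⬝ᵥ
          (ρ.submatrix (·, m) (·, m) *ᵥ fun a => x (a, m)) := by
      simp only [dotProduct_submatrix_mulVec_slice, y]
    _ ≤ Fintype.card ν * ∑ m, ∑ b, star (fun a => x (a, b)) ⬝ᵥ
          (ρ.submatrix (·, m) (·, m) *ᵥ fun a => x (a, b)) := by
      gcongr with m
      exact Finset.single_le_sum (f := fun b => star (fun a => x (a, b)) ⬝ᵥ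
          (ρ.submatrix (·, m) (·, m) *ᵥ fun a => x (a, b)))
        (fun b _ => (hρ.submatrix _).dotProduct_mulVec_nonneg _) (Finset.mem_univ m)
    _ = Fintype.card ν * star x ⬝ᵥ ((ρ.partialTraceRight ⊗ₖ 1) *ᵥ x) := by
      rw [dotProduct_kronecker_one_mulVec, Finset.sum_comm]
      simp only [dotProduct_partialTraceRight_mulVec]

end Matrix

lemma tensorMap_id_tomiyamaChoi {k n : ℕ} (lam : ℝ)
    (ρ : Matrix (Fin k × Fin n) (Fin k × Fin n) ℂ) :
    tensorMap (LinearMap.id : Matrix (Fin k) (Fin k) ℂ →ₗ[ℂ] Matrix (Fin k) (Fin k) ℂ)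
        (tomiyamaChoi n lam) ρ = (lam : ℂ) • (ρ.partialTraceRight ⊗ₖ 1) - ρ := by
  ext ⟨a, b⟩ ⟨c, d⟩
  simp only [tensorMap, tomiyamaChoi, LinearMap.id_coe, id_eq, Matrix.sum_apply,
    kroneckerMap_apply, LinearMap.coe_mk, AddHom.coe_mk, Matrix.sub_apply, Matrix.smul_apply,
    one_apply, trace, diag, of_apply, smul_eq_mul, single_apply, partialTraceRight_apply]
  rw [Finset.sum_comm, Finset.sum_eq_single c (fun j _ hj => by simp [hj]) (by simp),
    Finset.sum_eq_single a (fun i _ hi => by simp [hi]) (by simp)]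
  simp [mul_ite]

/-- `φ_λ` is completely positive iff `λ ≥ n`. -/
theorem stmt_18 {n : ℕ} (hn : 0 < n) (lam : ℝ) :
    (∀ (k : ℕ) (ρ : Matrix (Fin k × Fin n) (Fin k × Fin n) ℂ), ρ.PosSemidef →
      (tensorMap (LinearMap.id : Matrix (Fin k) (Fin k) ℂ →ₗ[ℂ] Matrix (Fin k) (Fin k) ℂ)
        (tomiyamaChoi n lam) ρ).PosSemidef) ↔
    (n : ℝ) ≤ lam := by
  simp only [tensorMap_id_tomiyamaChoi]
  constructor
  · intro h
    set Ω := vec (1 : Matrix (Fin n) (Fin n) ℂ)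
    have hΩ := h n _ (posSemidef_vecMulVec_self_star Ω)
    rw [partialTraceRight_vecMulVec_vec_one, one_kronecker_one] at hΩ
    have hval : star Ω ⬝ᵥ (((lam : ℂ) • 1 - vecMulVec Ω (star Ω)) *ᵥ Ω) =
        ((lam * n - n ^ 2 : ℝ) : ℂ) := by
      simp [sub_mulVec, smul_mulVec, vecMulVec_mulVec, dotProduct_sub, Ω,
        star_vec_one_dotProduct_vec_one]
      ring
    have hquad := hval ▸ hΩ.dotProduct_mulVec_nonneg Ω
    have hn' : (0 : ℝ) < n := by exact_mod_cast hn
    nlinarith [Complex.zero_le_real.mp hquad]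
  · intro hle k ρ hρ
    have hsplit : (lam : ℂ) • (ρ.partialTraceRight ⊗ₖ 1) - ρ =
        ((lam - n : ℝ) : ℂ) • (ρ.partialTraceRight ⊗ₖ 1) +
          ((Fintype.card (Fin n) : ℂ) • (ρ.partialTraceRight ⊗ₖ 1) - ρ) := by
      rw [Fintype.card_fin]
      push_cast
      module
    rw [hsplit]
    exact ((hρ.partialTraceRight.kronecker .one).smul
      (Complex.zero_le_real.mpr (sub_nonneg.mpr hle))).add
      hρ.card_smul_partialTraceRight_kronecker_one_sub
end
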